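/- Let ρ1 and ρ2 be n×n density matrices and let d : ℝ^n → ℝ be a Schur-convex function. Then for every n×n unitary matrix U one has d(λ(ρ1 − Uρ2U†)) ≥ d(λ(Λ↓(ρ1) − Λ↓(ρ2))), and there exists a unitary U for which equality holds; in other words, the minimum of d(λ(ρ1 − Uρ2U†)) over all unitary U equals d(λ(Λ↓(ρ1) − Λ↓(ρ2))). -/

import Mathlib

open Matrix
open scoped ComplexOrder Classical

/-- The vector of a tuple's entries sorted in decreasing (nonincreasing) order. -/
noncomputable def sortDec {n : ℕ} (x : Fin n → ℝ) : Fin n → ℝ :=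
  fun i => x (Tuple.sort x i.rev)

/-- The eigenvalues of a Hermitian matrix arranged in decreasing order,
`λ(A)`; junk value `0` if `A` is not Hermitian. -/
noncomputable def eigsDec {n : ℕ} (A : Matrix (Fin n) (Fin n) ℂ) : Fin n → ℝ :=
  if hA : A.IsHermitian then sortDec hA.eigenvalues else 0

/-- The eigenvalues of a Hermitian matrix arranged in increasing order. -/
noncomputable def eigsInc {n : ℕ} (A : Matrix (Fin n) (Fin n) ℂ) : Fin n → ℝ :=
  fun i => eigsDec A i.rev

/-- `Λ↓(A)`: the diagonal matrix of the eigenvalues of `A` in decreasing order. -/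
noncomputable def LambdaDown {n : ℕ} (A : Matrix (Fin n) (Fin n) ℂ) :
    Matrix (Fin n) (Fin n) ℂ :=
  Matrix.diagonal fun i => (eigsDec A i : ℂ)

/-- `Λ↑(A)`: the diagonal matrix of the eigenvalues of `A` in increasing order. -/
noncomputable def LambdaUp {n : ℕ} (A : Matrix (Fin n) (Fin n) ℂ) :
    Matrix (Fin n) (Fin n) ℂ :=
  Matrix.diagonal fun i => (eigsInc A i : ℂ)

/-- `x ≺ y`: the sum of the `k` largest entries of `x` is at most that of `y`
for every `k`, with equality of the total sums. -/
def Majorizes {n : ℕ} (x y : Fin n → ℝ) : Prop :=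
  (∀ k : ℕ, ∑ i ∈ Finset.univ.filter (fun i : Fin n => (i : ℕ) < k), sortDec x i ≤
      ∑ i ∈ Finset.univ.filter (fun i : Fin n => (i : ℕ) < k), sortDec y i) ∧
    (∑ i, x i) = ∑ i, y i

/-- A function `d` is Schur-convex if `x ≺ y` implies `d x ≤ d y`. -/
def SchurConvex {n : ℕ} (d : (Fin n → ℝ) → ℝ) : Prop :=
  ∀ x y : Fin n → ℝ, Majorizes x y → d x ≤ d y

/-- A density matrix: positive semidefinite with trace one. -/
def IsDensityMatrix {n : ℕ} (ρ : Matrix (Fin n) (Fin n) ℂ) : Prop :=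
  ρ.PosSemidef ∧ ρ.trace = 1

/-- A quantum channel: completely positive trace preserving map in Kraus form. -/
def IsQuantumChannel {n : ℕ}
    (Φ : Matrix (Fin n) (Fin n) ℂ → Matrix (Fin n) (Fin n) ℂ) : Prop :=
  ∃ (r : ℕ) (F : Fin r → Matrix (Fin n) (Fin n) ℂ),
    (∑ j, (F j)ᴴ * F j) = 1 ∧ ∀ X, Φ X = ∑ j, F j * X * (F j)ᴴ

/-- A unital quantum channel. -/
def IsUnitalChannel {n : ℕ}
    (Φ : Matrix (Fin n) (Fin n) ℂ → Matrix (Fin n) (Fin n) ℂ) : Prop :=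
  IsQuantumChannel Φ ∧ Φ 1 = 1

/-- A mixed unitary channel: a convex combination of unitary conjugations. -/
def IsMixedUnitaryChannel {n : ℕ}
    (Φ : Matrix (Fin n) (Fin n) ℂ → Matrix (Fin n) (Fin n) ℂ) : Prop :=
  ∃ (r : ℕ) (t : Fin r → ℝ) (U : Fin r → Matrix (Fin n) (Fin n) ℂ),
    (∀ j, 0 ≤ t j) ∧ (∑ j, t j) = 1 ∧
      (∀ j, U j ∈ Matrix.unitaryGroup (Fin n) ℂ) ∧
      ∀ X, Φ X = ∑ j, (t j : ℂ) • (U j * X * (U j)ᴴ)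

/-- Functional calculus: `f(A)` for a Hermitian matrix `A`, via the spectral theorem;
junk value `0` if `A` is not Hermitian. -/
noncomputable def matFun {n : ℕ} (f : ℝ → ℝ) (A : Matrix (Fin n) (Fin n) ℂ) :
    Matrix (Fin n) (Fin n) ℂ :=
  if hA : A.IsHermitian then
    (hA.eigenvectorUnitary : Matrix (Fin n) (Fin n) ℂ) *
      Matrix.diagonal (fun i => (f (hA.eigenvalues i) : ℂ)) *
      (hA.eigenvectorUnitary : Matrix (Fin n) (Fin n) ℂ)ᴴ
  else 0

/-- The positive semidefinite square root of a PSD matrix, as `Matrix.PosSemidef.sqrt`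
was defined in Mathlib (December 2024). -/
noncomputable def psdSqrt {n : ℕ} {A : Matrix (Fin n) (Fin n) ℂ} (hA : A.PosSemidef) :
    Matrix (Fin n) (Fin n) ℂ :=
  hA.1.eigenvectorUnitary.1 * diagonal ((↑) ∘ (√·) ∘ hA.1.eigenvalues) *
    (star hA.1.eigenvectorUnitary : Matrix (Fin n) (Fin n) ℂ)

/-- `|A| = (AᴴA)^{1/2}`. -/
noncomputable def matAbs {n : ℕ} (A : Matrix (Fin n) (Fin n) ℂ) :
    Matrix (Fin n) (Fin n) ℂ :=
  psdSqrt (Matrix.posSemidef_conjTranspose_mul_self A)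

/-- `tr|A|`, the sum of the singular values of `A`. -/
noncomputable def traceAbs {n : ℕ} (A : Matrix (Fin n) (Fin n) ℂ) : ℝ :=
  ((matAbs A).trace).re

/-- The singular values of `A` in decreasing order. -/
noncomputable def singVals {n : ℕ} (A : Matrix (Fin n) (Fin n) ℂ) : Fin n → ℝ :=
  eigsDec (matAbs A)

/-- The positive semidefinite square root of a PSD matrix (junk value `0` otherwise). -/
noncomputable def matSqrt {n : ℕ} (A : Matrix (Fin n) (Fin n) ℂ) :
    Matrix (Fin n) (Fin n) ℂ :=
  if hA : A.PosSemidef then psdSqrt hA else 0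

/-- The fidelity `F(ρ,σ) = tr|ρ^{1/2} σ^{1/2}|`. -/
noncomputable def fidelity {n : ℕ} (ρ σ : Matrix (Fin n) (Fin n) ℂ) : ℝ :=
  traceAbs (matSqrt ρ * matSqrt σ)

/-- The relative entropy `S(ρ‖σ) = tr(ρ (log ρ - log σ))`. -/
noncomputable def relEntropy {n : ℕ} (ρ σ : Matrix (Fin n) (Fin n) ℂ) : ℝ :=
  ((ρ * (matFun Real.log ρ - matFun Real.log σ)).trace).re

/-- The (real) trace of a matrix whose trace is real. -/
noncomputable def trR {n : ℕ} (A : Matrix (Fin n) (Fin n) ℂ) : ℝ := A.trace.re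

open scoped MatrixOrder

/-!
Eigenvalues of Hermitian matrices are monotone in the Loewner order: if `A ≤ B`, a dimension
count gives a unit vector in the span of the top `k + 1` eigenvectors of `A` and of the bottom
`n - k` eigenvectors of `B`, and its Rayleigh quotients squeeze `λₖ(A) ≤ λₖ(B)`.

Lidskii's inequality follows. With `C = A - B`, `t = λₘ(C)` and `P = (C - t)₊`, we have
`A ≤ B + P + t` and `B ≤ B + P`, so for any `m + 1` indices the sum of `λᵢ(A) - λᵢ(B)` is at
most `tr P + (m + 1) t = λ₀(C) + ⋯ + λₘ(C)`.

For `A = ρ1` and `B = U ρ2 Uᴴ`, which has the spectrum of `ρ2`, this is the majorization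
`λ(ρ1) - λ(ρ2) ≺ λ(ρ1 - U ρ2 Uᴴ)`, and Schur-convexity of `d` gives the inequality. Equality is
attained by the `U` carrying the sorted eigenbasis of `ρ2` to that of `ρ1`.
-/

section SortDec

variable {n : ℕ}

lemma sortDec_antitone (x : Fin n → ℝ) : Antitone (sortDec x) :=
  fun _ _ hij => Tuple.monotone_sort x (Fin.rev_le_rev.mpr hij)

lemma ofFn_sortDec_perm (x : Fin n → ℝ) : (List.ofFn (sortDec x)).Perm (List.ofFn x) :=
  Equiv.Perm.ofFn_comp_perm (Fin.revPerm.trans (Tuple.sort x)) x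

lemma sortDec_eq_of_antitone_of_perm {x y : Fin n → ℝ} (hy : Antitone y)
    (h : (List.ofFn y).Perm (List.ofFn x)) : sortDec x = y :=
  List.ofFn_injective <| ((ofFn_sortDec_perm x).trans h.symm).eq_of_sortedGE
    (sortDec_antitone x).sortedGE_ofFn hy.sortedGE_ofFn

lemma sortDec_of_antitone {x : Fin n → ℝ} (hx : Antitone x) : sortDec x = x :=
  sortDec_eq_of_antitone_of_perm hx (List.Perm.refl _)

lemma sortDec_eq_of_perm {x y : Fin n → ℝ} (h : (List.ofFn x).Perm (List.ofFn y)) :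
    sortDec x = sortDec y :=
  sortDec_eq_of_antitone_of_perm (sortDec_antitone y) ((ofFn_sortDec_perm y).trans h.symm)

lemma sum_sortDec (x : Fin n → ℝ) : ∑ i, sortDec x i = ∑ i, x i :=
  Equiv.sum_comp (Fin.revPerm.trans (Tuple.sort x)) x

end SortDec

section Spectral

variable {n : ℕ}

lemma isHermitian_diagonal_ofReal (d : Fin n → ℝ) : (diagonal fun i => (d i : ℂ)).IsHermitian :=
  isHermitian_diagonal_iff.mpr fun i => Complex.conj_ofReal (d i)

lemma charpoly_unitary_conj {V : Matrix (Fin n) (Fin n) ℂ} (hV : V ∈ unitaryGroup (Fin n) ℂ)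
    (A : Matrix (Fin n) (Fin n) ℂ) : (V * A * Vᴴ).charpoly = A.charpoly := by
  rw [charpoly_mul_comm, ← mul_assoc, ← star_eq_conjTranspose, Unitary.star_mul_self_of_mem hV,
    one_mul]

lemma eigsDec_unitary_conj_diagonal {V : Matrix (Fin n) (Fin n) ℂ}
    (hV : V ∈ unitaryGroup (Fin n) ℂ) (d : Fin n → ℝ) :
    eigsDec (V * diagonal (fun i => (d i : ℂ)) * Vᴴ) = sortDec d := by
  have hM := isHermitian_mul_mul_conjTranspose V (isHermitian_diagonal_ofReal d)
  have hroots : (Finset.univ.val.map hM.eigenvalues).map (RCLike.ofReal : ℝ → ℂ) =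
      (Finset.univ.val.map d).map (RCLike.ofReal : ℝ → ℂ) := by
    rw [Multiset.map_map, ← hM.roots_charpoly_eq_eigenvalues, charpoly_unitary_conj hV,
      charpoly_diagonal, Polynomial.roots_prod _ _
        (by simp [Finset.prod_ne_zero_iff, Polynomial.X_sub_C_ne_zero])]
    simp only [Polynomial.roots_X_sub_C, Multiset.map_map]
    exact Multiset.bind_singleton _ _
  rw [eigsDec, dif_pos hM]
  refine sortDec_eq_of_perm (Multiset.coe_eq_coe.mp ?_)
  rw [← Fin.univ_val_map, ← Fin.univ_val_map]
  exact Multiset.map_injective RCLike.ofReal_injective hroots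

lemma exists_unitary_eq_conj_lambdaDown {A : Matrix (Fin n) (Fin n) ℂ}
    (hA : A.IsHermitian) :
    ∃ V ∈ unitaryGroup (Fin n) ℂ, A = V * LambdaDown A * Vᴴ := by
  set e := Fin.revPerm.trans (Tuple.sort hA.eigenvalues)
  set W : Matrix (Fin n) (Fin n) ℂ := hA.eigenvectorUnitary.1
  have hdiag : LambdaDown A =
      (diagonal (RCLike.ofReal ∘ hA.eigenvalues)).submatrix e e := by
    rw [submatrix_diagonal_equiv]
    simp [LambdaDown, eigsDec, hA, sortDec, e]
  refine ⟨W.submatrix id e, ?_, ?_⟩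
  · rw [mem_unitaryGroup_iff, star_eq_conjTranspose, conjTranspose_submatrix, submatrix_mul_equiv,
      ← star_eq_conjTranspose, Unitary.mul_star_self_of_mem hA.eigenvectorUnitary.2,
      submatrix_id_id]
  · rw [hdiag, conjTranspose_submatrix, submatrix_mul_equiv, submatrix_mul_equiv,
      submatrix_id_id]
    exact hA.spectral_theorem

lemma eigsDec_antitone (A : Matrix (Fin n) (Fin n) ℂ) : Antitone (eigsDec A) := by
  unfold eigsDec
  split
  · exact sortDec_antitone _
  · exact antitone_const

lemma eigsDec_diagonal (d : Fin n → ℝ) : eigsDec (diagonal fun i => (d i : ℂ)) = sortDec d := by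
  simpa using eigsDec_unitary_conj_diagonal (one_mem (unitaryGroup (Fin n) ℂ)) d

lemma eigsDec_unitary_conj {A U : Matrix (Fin n) (Fin n) ℂ} (hA : A.IsHermitian)
    (hU : U ∈ unitaryGroup (Fin n) ℂ) : eigsDec (U * A * Uᴴ) = eigsDec A := by
  obtain ⟨V, hV, hAV⟩ := exists_unitary_eq_conj_lambdaDown hA
  have : U * A * Uᴴ = (U * V) * LambdaDown A * (U * V)ᴴ := by
    conv_lhs => rw [hAV]
    simp only [conjTranspose_mul, Matrix.mul_assoc]
  rw [this, LambdaDown, eigsDec_unitary_conj_diagonal (mul_mem hU hV),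
    sortDec_of_antitone (eigsDec_antitone A)]

lemma re_trace_eq_sum_eigsDec {A : Matrix (Fin n) (Fin n) ℂ} (hA : A.IsHermitian) :
    A.trace.re = ∑ i, eigsDec A i := by
  rw [hA.trace_eq_sum_eigenvalues, eigsDec, dif_pos hA, sum_sortDec]
  simp

end Spectral

section Weyl

variable {n : ℕ}

lemma exists_ne_zero_mulVec_eq_zero (V W : Matrix (Fin n) (Fin n) ℂ) (k : Fin n) :
    ∃ x ≠ 0, (∀ j, k < j → (V *ᵥ x) j = 0) ∧ ∀ j, j < k → (W *ᵥ x) j = 0 := by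
  let L : (Fin n → ℂ) →ₗ[ℂ] ({j : Fin n // j ≠ k} → ℂ) :=
    LinearMap.pi fun j => LinearMap.proj j.1 ∘ₗ (if k < j.1 then V else W).mulVecLin
  have hdim : Module.finrank ℂ ({j : Fin n // j ≠ k} → ℂ) < Module.finrank ℂ (Fin n → ℂ) := by
    simpa [Fintype.card_subtype_compl] using k.pos
  obtain ⟨x, hx, hx0⟩ :=
    (Submodule.ne_bot_iff _).mp (LinearMap.ker_ne_bot_of_finrank_lt (f := L) hdim)
  have hLx := LinearMap.mem_ker.mp hx
  refine ⟨x, hx0, fun j hj => ?_, fun j hj => ?_⟩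
  · simpa [L, hj] using congrFun hLx ⟨j, hj.ne'⟩
  · simpa [L, hj.not_gt] using congrFun hLx ⟨j, hj.ne⟩

lemma re_star_dotProduct_conj_diagonal_mulVec (V : Matrix (Fin n) (Fin n) ℂ)
    (d : Fin n → ℝ) (x : Fin n → ℂ) :
    (star x ⬝ᵥ (V * diagonal (fun i => (d i : ℂ)) * Vᴴ) *ᵥ x).re =
      ∑ j, d j * Complex.normSq ((Vᴴ *ᵥ x) j) := by
  rw [← mulVec_mulVec, ← mulVec_mulVec, dotProduct_mulVec, ← conjTranspose_conjTranspose V,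
    ← star_mulVec, conjTranspose_conjTranspose, dotProduct, Complex.re_sum]
  refine Finset.sum_congr rfl fun j _ => ?_
  rw [mulVec_diagonal, Pi.star_apply, Complex.star_def, mul_left_comm,
    ← Complex.normSq_eq_conj_mul_self, ← Complex.ofReal_mul, Complex.ofReal_re]

lemma conjTranspose_mem_unitaryGroup {U : Matrix (Fin n) (Fin n) ℂ}
    (hU : U ∈ unitaryGroup (Fin n) ℂ) : Uᴴ ∈ unitaryGroup (Fin n) ℂ :=
  Unitary.star_mem hU

lemma sum_normSq_unitary_mulVec {U : Matrix (Fin n) (Fin n) ℂ} (hU : U ∈ unitaryGroup (Fin n) ℂ)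
    (x : Fin n → ℂ) : ∑ j, Complex.normSq ((U *ᵥ x) j) = ∑ j, Complex.normSq (x j) := by
  -- both sums are `re (xᴴ x)`, read off the quadratic forms of `Uᴴ * 1 * U = 1` and `1 * 1 * 1`
  have hU' := re_star_dotProduct_conj_diagonal_mulVec Uᴴ (fun _ => 1) x
  have h1 := re_star_dotProduct_conj_diagonal_mulVec 1 (fun _ => 1) x
  rw [conjTranspose_conjTranspose] at hU'
  simp only [Complex.ofReal_one, diagonal_one, Matrix.mul_one, ← star_eq_conjTranspose,
    Unitary.star_mul_self_of_mem hU, one_mul, star_one, one_mulVec] at hU' h1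
  rw [← hU', h1]

lemma Antitone.apply_mul_sum_le_sum_mul {α w : Fin n → ℝ} (hα : Antitone α)
    (hw : ∀ j, 0 ≤ w j) {k : Fin n} (hk : ∀ j, k < j → w j = 0) :
    α k * ∑ j, w j ≤ ∑ j, α j * w j := by
  rw [Finset.mul_sum]
  refine Finset.sum_le_sum fun j _ => ?_
  rcases lt_or_ge k j with h | h
  · simp [hk j h]
  · exact mul_le_mul_of_nonneg_right (hα h) (hw j)

lemma Antitone.sum_mul_le_apply_mul_sum {α w : Fin n → ℝ} (hα : Antitone α)
    (hw : ∀ j, 0 ≤ w j) {k : Fin n} (hk : ∀ j, j < k → w j = 0) :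
    ∑ j, α j * w j ≤ α k * ∑ j, w j := by
  rw [Finset.mul_sum]
  refine Finset.sum_le_sum fun j _ => ?_
  rcases lt_or_ge j k with h | h
  · simp [hk j h]
  · exact mul_le_mul_of_nonneg_right (hα h) (hw j)

theorem eigsDec_mono {A B : Matrix (Fin n) (Fin n) ℂ} (hA : A.IsHermitian) (hAB : A ≤ B)
    (k : Fin n) : eigsDec A k ≤ eigsDec B k := by
  have hB : B.IsHermitian := by simpa using hA.add (le_iff.mp hAB).isHermitian
  obtain ⟨V, hV, hAV⟩ := exists_unitary_eq_conj_lambdaDown hA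
  obtain ⟨W, hW, hBW⟩ := exists_unitary_eq_conj_lambdaDown hB
  obtain ⟨x, hx0, hVx, hWx⟩ := exists_ne_zero_mulVec_eq_zero Vᴴ Wᴴ k
  have hx : 0 < ∑ j, Complex.normSq (x j) := by
    obtain ⟨i, hi⟩ := Function.ne_iff.mp hx0
    exact Finset.sum_pos' (fun j _ => Complex.normSq_nonneg _)
      ⟨i, Finset.mem_univ i, Complex.normSq_pos.mpr hi⟩
  have hquad : (star x ⬝ᵥ A *ᵥ x).re ≤ (star x ⬝ᵥ B *ᵥ x).re := by
    have := (le_iff.mp hAB).re_dotProduct_nonneg x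
    rw [sub_mulVec, dotProduct_sub, map_sub] at this
    simpa using this
  refine le_of_mul_le_mul_right ?_ hx
  calc eigsDec A k * ∑ j, Complex.normSq (x j)
      = eigsDec A k * ∑ j, Complex.normSq ((Vᴴ *ᵥ x) j) := by
        rw [sum_normSq_unitary_mulVec (conjTranspose_mem_unitaryGroup hV)]
    _ ≤ ∑ j, eigsDec A j * Complex.normSq ((Vᴴ *ᵥ x) j) :=
        (eigsDec_antitone A).apply_mul_sum_le_sum_mul (fun _ => Complex.normSq_nonneg _)
          fun j hj => by simp [hVx j hj]
    _ = (star x ⬝ᵥ A *ᵥ x).re := by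
        conv_rhs => rw [hAV]
        exact (re_star_dotProduct_conj_diagonal_mulVec V _ x).symm
    _ ≤ (star x ⬝ᵥ B *ᵥ x).re := hquad
    _ = ∑ j, eigsDec B j * Complex.normSq ((Wᴴ *ᵥ x) j) := by
        conv_lhs => rw [hBW]
        exact re_star_dotProduct_conj_diagonal_mulVec W _ x
    _ ≤ eigsDec B k * ∑ j, Complex.normSq ((Wᴴ *ᵥ x) j) :=
        (eigsDec_antitone B).sum_mul_le_apply_mul_sum (fun _ => Complex.normSq_nonneg _)
          fun j hj => by simp [hWx j hj]
    _ = eigsDec B k * ∑ j, Complex.normSq (x j) := by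
        rw [sum_normSq_unitary_mulVec (conjTranspose_mem_unitaryGroup hW)]

end Weyl

section Lidskii

variable {n : ℕ}

lemma Antitone.sum_max_sub_apply_eq {γ : Fin n → ℝ} (hγ : Antitone γ) (m : Fin n) :
    ∑ i, max (γ i - γ m) 0 = ∑ i ∈ Finset.Iic m, (γ i - γ m) := by
  rw [← Finset.sum_subset (Finset.subset_univ (Finset.Iic m)) fun i _ hi => ?_]
  · refine Finset.sum_congr rfl fun i hi => max_eq_left ?_
    exact sub_nonneg.mpr (hγ (Finset.mem_Iic.mp hi))
  · exact max_eq_right (sub_nonpos.mpr (hγ (not_le.mp (Finset.mem_Iic.not.mp hi)).le))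

lemma conj_diagonal_le_conj_diagonal {V : Matrix (Fin n) (Fin n) ℂ} {d e : Fin n → ℝ} (h : d ≤ e) :
    V * diagonal (fun i => (d i : ℂ)) * Vᴴ ≤ V * diagonal (fun i => (e i : ℂ)) * Vᴴ := by
  rw [le_iff, ← sub_mul, ← mul_sub, diagonal_sub]
  refine PosSemidef.mul_mul_conjTranspose_same (posSemidef_diagonal_iff.mpr fun i => ?_) V
  simpa [← Complex.ofReal_sub, Complex.zero_le_real] using h i

lemma unitary_conj_smul_one {V : Matrix (Fin n) (Fin n) ℂ} (hV : V ∈ unitaryGroup (Fin n) ℂ)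
    (t : ℂ) : V * (t • 1) * Vᴴ = t • 1 := by
  rw [Matrix.mul_smul, Matrix.mul_one, Matrix.smul_mul, ← star_eq_conjTranspose,
    Unitary.mul_star_self_of_mem hV]

lemma unitary_conj_diagonal_add_const {V : Matrix (Fin n) (Fin n) ℂ}
    (hV : V ∈ unitaryGroup (Fin n) ℂ) (d : Fin n → ℝ) (t : ℝ) :
    V * diagonal (fun i => ((d i + t : ℝ) : ℂ)) * Vᴴ =
      V * diagonal (fun i => (d i : ℂ)) * Vᴴ + (t : ℂ) • 1 := by
  rw [← unitary_conj_smul_one hV, ← Matrix.add_mul, ← Matrix.mul_add, smul_one_eq_diagonal,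
    diagonal_add]
  push_cast
  rfl

lemma eigsDec_add_smul_one {M : Matrix (Fin n) (Fin n) ℂ} (hM : M.IsHermitian) (t : ℝ) :
    eigsDec (M + (t : ℂ) • 1) = fun i => eigsDec M i + t := by
  obtain ⟨V, hV, hMV⟩ := exists_unitary_eq_conj_lambdaDown hM
  conv_lhs => rw [hMV, LambdaDown, ← unitary_conj_diagonal_add_const hV,
    eigsDec_unitary_conj_diagonal hV]
  exact sortDec_of_antitone fun i j hij => add_le_add_left (eigsDec_antitone M hij) t

lemma exists_nonneg_le_add_smul_one {C : Matrix (Fin n) (Fin n) ℂ} (hC : C.IsHermitian) (t : ℝ) :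
    ∃ P, 0 ≤ P ∧ C ≤ P + (t : ℂ) • 1 ∧ ∑ i, eigsDec P i = ∑ i, max (eigsDec C i - t) 0 := by
  obtain ⟨V, hV, hCV⟩ := exists_unitary_eq_conj_lambdaDown hC
  set f := fun i => max (eigsDec C i - t) 0
  refine ⟨V * diagonal (fun i => (f i : ℂ)) * Vᴴ, ?_, ?_, ?_⟩
  · simpa using conj_diagonal_le_conj_diagonal (V := V) (d := 0) (e := f) fun i => le_max_right _ _
  · rw [← unitary_conj_diagonal_add_const hV]
    conv_lhs => rw [hCV]
    exact conj_diagonal_le_conj_diagonal fun i =>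
      show eigsDec C i ≤ f i + t by linarith [le_max_left (eigsDec C i - t) 0]
  · rw [eigsDec_unitary_conj_diagonal hV, sum_sortDec]

theorem sum_Iic_eigsDec_sub_eigsDec_le {A B : Matrix (Fin n) (Fin n) ℂ} (hA : A.IsHermitian)
    (hB : B.IsHermitian) (σ : Equiv.Perm (Fin n)) (m : Fin n) :
    ∑ i ∈ Finset.Iic m, (eigsDec A (σ i) - eigsDec B (σ i)) ≤
      ∑ i ∈ Finset.Iic m, eigsDec (A - B) i := by
  set γ := eigsDec (A - B)
  set t := γ m
  obtain ⟨P, hP, hABP, htrP⟩ := exists_nonneg_le_add_smul_one (hA.sub hB) t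
  have hBP : (B + P).IsHermitian := hB.add (nonneg_iff_posSemidef.mp hP).isHermitian
  have hA_le : ∀ i, eigsDec A i ≤ eigsDec (B + P) i + t := by
    have hA_le' : A ≤ B + P + (t : ℂ) • 1 :=
      calc A = B + (A - B) := (add_sub_cancel B A).symm
        _ ≤ B + (P + (t : ℂ) • 1) := by gcongr
        _ = B + P + (t : ℂ) • 1 := (add_assoc _ _ _).symm
    have := eigsDec_mono hA hA_le'
    rwa [eigsDec_add_smul_one hBP] at this
  have hB_le : ∀ i, eigsDec B i ≤ eigsDec (B + P) i := eigsDec_mono hB (le_add_of_nonneg_right hP)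
  have htr : ∑ i, (eigsDec (B + P) i - eigsDec B i) = ∑ i, max (γ i - t) 0 := by
    rw [Finset.sum_sub_distrib, ← re_trace_eq_sum_eigsDec hBP, ← re_trace_eq_sum_eigsDec hB,
      trace_add, Complex.add_re, re_trace_eq_sum_eigsDec (nonneg_iff_posSemidef.mp hP).isHermitian,
      htrP]
    ring
  calc ∑ i ∈ Finset.Iic m, (eigsDec A (σ i) - eigsDec B (σ i))
      ≤ ∑ i ∈ Finset.Iic m, ((eigsDec (B + P) (σ i) - eigsDec B (σ i)) + t) :=
        Finset.sum_le_sum fun i _ => by linarith [hA_le (σ i)]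
    _ ≤ ∑ i, (eigsDec (B + P) (σ i) - eigsDec B (σ i)) + ∑ i ∈ Finset.Iic m, t := by
        rw [Finset.sum_add_distrib]
        gcongr ?_ + _
        exact Finset.sum_le_univ_sum_of_nonneg fun i => sub_nonneg.mpr (hB_le (σ i))
    _ = ∑ i ∈ Finset.Iic m, γ i := by
        rw [Equiv.sum_comp σ (fun i => eigsDec (B + P) i - eigsDec B i), htr,
          (eigsDec_antitone (A - B)).sum_max_sub_apply_eq m, ← Finset.sum_add_distrib]
        exact Finset.sum_congr rfl fun i _ => sub_add_cancel _ _

end Lidskii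

section Majorization

variable {n : ℕ}

lemma filter_val_lt_eq_empty_or_Iic (k : ℕ) :
    Finset.univ.filter (fun i : Fin n => (i : ℕ) < k) = ∅ ∨
      ∃ m : Fin n, Finset.univ.filter (fun i : Fin n => (i : ℕ) < k) = Finset.Iic m := by
  rcases Nat.eq_zero_or_pos (min k n) with h | h
  · left
    ext i
    simp only [Finset.mem_filter, Finset.mem_univ, true_and, Finset.notMem_empty, iff_false]
    omega
  · right
    refine ⟨⟨min k n - 1, by omega⟩, ?_⟩
    ext i
    simp only [Finset.mem_filter, Finset.mem_univ, true_and, Finset.mem_Iic, Fin.le_def]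
    omega

lemma lambdaDown_sub_lambdaDown (A B : Matrix (Fin n) (Fin n) ℂ) :
    LambdaDown A - LambdaDown B = diagonal fun i => ((eigsDec A i - eigsDec B i : ℝ) : ℂ) := by
  rw [LambdaDown, LambdaDown, diagonal_sub]
  push_cast
  rfl

theorem majorizes_eigsDec_lambdaDown_sub {A B U : Matrix (Fin n) (Fin n) ℂ} (hA : A.IsHermitian)
    (hB : B.IsHermitian) (hU : U ∈ unitaryGroup (Fin n) ℂ) :
    Majorizes (eigsDec (LambdaDown A - LambdaDown B)) (eigsDec (A - U * B * Uᴴ)) := by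
  set w := fun i => eigsDec A i - eigsDec B i
  have hw : eigsDec (LambdaDown A - LambdaDown B) = sortDec w := by
    rw [lambdaDown_sub_lambdaDown, eigsDec_diagonal]
  have hUB := isHermitian_mul_mul_conjTranspose U hB
  refine ⟨fun k => ?_, ?_⟩
  · rw [hw, sortDec_of_antitone (sortDec_antitone w), sortDec_of_antitone (eigsDec_antitone _)]
    rcases filter_val_lt_eq_empty_or_Iic (n := n) k with hk | ⟨m, hk⟩
    · simp [hk]
    · rw [hk]
      -- `sortDec w` is definitionally `w ∘ (Fin.revPerm.trans (Tuple.sort w))`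
      have := sum_Iic_eigsDec_sub_eigsDec_le hA hUB (Fin.revPerm.trans (Tuple.sort w)) m
      rwa [eigsDec_unitary_conj hB hU] at this
  · rw [hw, sum_sortDec, Finset.sum_sub_distrib, ← re_trace_eq_sum_eigsDec hA,
      ← re_trace_eq_sum_eigsDec hB, ← re_trace_eq_sum_eigsDec (hA.sub hUB), trace_sub,
      Complex.sub_re, trace_mul_cycle, ← star_eq_conjTranspose,
      Unitary.star_mul_self_of_mem hU, Matrix.one_mul]

lemma exists_unitary_eigsDec_sub_eq {A B : Matrix (Fin n) (Fin n) ℂ} (hA : A.IsHermitian)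
    (hB : B.IsHermitian) : ∃ U ∈ unitaryGroup (Fin n) ℂ,
      eigsDec (A - U * B * Uᴴ) = eigsDec (LambdaDown A - LambdaDown B) := by
  obtain ⟨V, hV, hAV⟩ := exists_unitary_eq_conj_lambdaDown hA
  obtain ⟨W, hW, hBW⟩ := exists_unitary_eq_conj_lambdaDown hB
  refine ⟨V * Wᴴ, mul_mem hV (conjTranspose_mem_unitaryGroup hW), ?_⟩
  have hWW : Wᴴ * W = 1 := Unitary.star_mul_self_of_mem hW
  have hUB : V * Wᴴ * B * (V * Wᴴ)ᴴ = V * LambdaDown B * Vᴴ := by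
    conv_lhs => rw [hBW]
    rw [conjTranspose_mul, conjTranspose_conjTranspose]
    simp only [← Matrix.mul_assoc]
    rw [Matrix.mul_assoc V, hWW, Matrix.mul_one, Matrix.mul_assoc (V * LambdaDown B), hWW,
      Matrix.mul_one]
  have hdiff : A - V * Wᴴ * B * (V * Wᴴ)ᴴ = V * (LambdaDown A - LambdaDown B) * Vᴴ := by
    conv_lhs => rw [hUB, hAV]
    rw [← Matrix.sub_mul, ← Matrix.mul_sub]
  rw [hdiff, eigsDec_unitary_conj _ hV]
  rw [lambdaDown_sub_lambdaDown]
  exact isHermitian_diagonal_ofReal _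

end Majorization

/-- For density matrices `ρ1, ρ2` and a Schur-convex `d`, the minimum of
`d(λ(ρ1 - U ρ2 Uᴴ))` over unitary `U` equals `d(λ(Λ↓(ρ1) - Λ↓(ρ2)))`. -/
theorem stmt_1 {n : ℕ} (ρ1 ρ2 : Matrix (Fin n) (Fin n) ℂ)
    (h1 : IsDensityMatrix ρ1) (h2 : IsDensityMatrix ρ2)
    (d : (Fin n → ℝ) → ℝ) (hd : SchurConvex d) :
    (∀ U ∈ Matrix.unitaryGroup (Fin n) ℂ,
        d (eigsDec (LambdaDown ρ1 - LambdaDown ρ2)) ≤ d (eigsDec (ρ1 - U * ρ2 * Uᴴ))) ∧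
      ∃ U ∈ Matrix.unitaryGroup (Fin n) ℂ,
        d (eigsDec (ρ1 - U * ρ2 * Uᴴ)) = d (eigsDec (LambdaDown ρ1 - LambdaDown ρ2)) := by
  have hρ1 : ρ1.IsHermitian := h1.1.isHermitian
  have hρ2 : ρ2.IsHermitian := h2.1.isHermitian
  refine ⟨fun U hU => hd _ _ (majorizes_eigsDec_lambdaDown_sub hρ1 hρ2 hU), ?_⟩
  obtain ⟨U, hU, hUeq⟩ := exists_unitary_eigsDec_sub_eq hρ1 hρ2
  exact ⟨U, hU, congrArg d hUeq⟩
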